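/- Let V be a 6-dimensional real inner product space with compatible complex structure J (J² = -1, ⟨Jx, Jy⟩ = ⟨x,y⟩) and associated 2-form ω(x,y) = ⟨Jx, y⟩. Let e₁,...,e₆ be an orthonormal basis with Je₁ = e₂, Je₃ = e₄, Je₅ = e₆, so ω = e¹∧e² + e³∧e⁴ + e⁵∧e⁶, and let φ = (r/2)(e¹∧e³∧e⁵ - e¹∧e⁴∧e⁶ - e²∧e⁴∧e⁵ - e²∧e³∧e⁶) for a constant r > 0. Then the bilinear identity ω^{ij} φ_{iab} φ_{jcd} = (r²/4)(ω_{ac} g_{bd} - ω_{bc} g_{ad} - ω_{ad} g_{bc} + ω_{bd} g_{ac}) holds, where ω^{ij} is the inverse of ω_{ij} and indices refer to the basis (e_i). -/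

import Mathlib

/-!
In the basis `(e_i)` one has `ω² = -1`, so the inverse `ω^{ij}` is `-ω_{ij}`. All components
involved are then integers, up to the factor `r / 2` of `φ`, and the identity becomes an
identity between integer tensors indexed by `Fin 6`, which is checked by evaluation.
-/

open scoped BigOperators

/-- Components of the basis 3-form `e^p ∧ e^q ∧ e^s` evaluated on `(e_i, e_j, e_k)`. -/
noncomputable def eps3 (p q s i j k : Fin 6) : ℝ :=
  Matrix.det (Matrix.of fun a b : Fin 3 => if ![p, q, s] a = ![i, j, k] b then (1 : ℝ) else 0)

/-- Components of `φ = (r/2)(e¹³⁵ - e¹⁴⁶ - e²⁴⁵ - e²³⁶)` (0-indexed). -/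
noncomputable def phiIIA (r : ℝ) (i j k : Fin 6) : ℝ :=
  (r / 2) * (eps3 0 2 4 i j k - eps3 0 3 5 i j k - eps3 1 3 4 i j k - eps3 1 2 5 i j k)

/-- Components of `ω = e¹∧e² + e³∧e⁴ + e⁵∧e⁶` in the orthonormal basis. -/
def omegaStd : Matrix (Fin 6) (Fin 6) ℝ :=
  !![0,1,0,0,0,0; -1,0,0,0,0,0; 0,0,0,1,0,0; 0,0,-1,0,0,0; 0,0,0,0,0,1; 0,0,0,0,-1,0]

/-- Components of the metric `g` in the orthonormal basis. -/
def gStd : Matrix (Fin 6) (Fin 6) ℝ := 1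

def omegaInt : Matrix (Fin 6) (Fin 6) ℤ :=
  !![0,1,0,0,0,0; -1,0,0,0,0,0; 0,0,0,1,0,0; 0,0,-1,0,0,0; 0,0,0,0,0,1; 0,0,0,0,-1,0]

lemma omegaStd_eq_mapMatrix : omegaStd = (Int.castRingHom ℝ).mapMatrix omegaInt := by
  ext i j
  fin_cases i <;> fin_cases j <;> simp [omegaStd, omegaInt]

lemma omegaStd_apply (i j : Fin 6) : omegaStd i j = omegaInt i j := by
  rw [omegaStd_eq_mapMatrix]
  rfl

lemma omegaInt_mul_self : omegaInt * omegaInt = -1 := by decide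

lemma neg_omegaStd_mul_self : -omegaStd * omegaStd = 1 := by
  rw [neg_mul, omegaStd_eq_mapMatrix, ← map_mul, omegaInt_mul_self, map_neg, map_one, neg_neg]

local notation "δ" => (1 : Matrix (Fin 6) (Fin 6) ℤ)

def eps3Int (p q s i j k : Fin 6) : ℤ :=
  δ p i * δ q j * δ s k - δ p i * δ q k * δ s j - δ p j * δ q i * δ s k
    + δ p j * δ q k * δ s i + δ p k * δ q i * δ s j - δ p k * δ q j * δ s i

lemma eps3_eq_eps3Int (p q s i j k : Fin 6) : eps3 p q s i j k = eps3Int p q s i j k := by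
  simp only [eps3, eps3Int, Matrix.one_apply, Matrix.det_fin_three, Matrix.of_apply,
    Matrix.cons_val_zero, Matrix.cons_val_one, Matrix.cons_val_two, Matrix.head_cons,
    Matrix.tail_cons]
  push_cast [apply_ite (Int.cast : ℤ → ℝ)]
  rfl

def phiInt (i j k : Fin 6) : ℤ :=
  eps3Int 0 2 4 i j k - eps3Int 0 3 5 i j k - eps3Int 1 3 4 i j k - eps3Int 1 2 5 i j k

lemma phiIIA_eq_phiInt (r : ℝ) (i j k : Fin 6) : phiIIA r i j k = r / 2 * phiInt i j k := by
  simp only [phiIIA, phiInt, eps3_eq_eps3Int]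
  push_cast
  rfl

lemma sum_omegaInt_mul_phiInt_mul_phiInt (a b c d : Fin 6) :
    ∑ i, ∑ j, omegaInt i j * phiInt i a b * phiInt j c d
      = -(omegaInt a c * δ b d - omegaInt b c * δ a d - omegaInt a d * δ b c
          + omegaInt b d * δ a c) := by
  revert a b c d
  decide

theorem typeIIA_bilinear_identity_general
    (r : ℝ)
    (ωInv : Matrix (Fin 6) (Fin 6) ℝ) (hinv : omegaStd * ωInv = 1)
    (a b c d : Fin 6) :
    (∑ i : Fin 6, ∑ j : Fin 6, ωInv i j * phiIIA r i a b * phiIIA r j c d)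
      = r ^ 2 / 4 * (omegaStd a c * gStd b d - omegaStd b c * gStd a d
          - omegaStd a d * gStd b c + omegaStd b d * gStd a c) := by
  obtain rfl : ωInv = -omegaStd := (left_inv_eq_right_inv neg_omegaStd_mul_self hinv).symm
  have hInt := congrArg (Int.cast : ℤ → ℝ) (sum_omegaInt_mul_phiInt_mul_phiInt a b c d)
  push_cast at hInt
  simp only [gStd, omegaStd_apply, Matrix.neg_apply, phiIIA_eq_phiInt]
  calc _ = -(r ^ 2 / 4) * ∑ i, ∑ j, (omegaInt i j : ℝ) * phiInt i a b * phiInt j c d := by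
        simp only [Finset.mul_sum]
        exact Finset.sum_congr rfl fun i _ => Finset.sum_congr rfl fun j _ => by ring
    _ = _ := by
        rw [hInt]
        simp only [Matrix.one_apply, Int.cast_ite, Int.cast_one, Int.cast_zero]
        ring

/-- The fundamental bilinear identity
`ω^{ij} φ_{iab} φ_{jcd} = (r²/4)(ω_{ac} g_{bd} - ω_{bc} g_{ad} - ω_{ad} g_{bc} + ω_{bd} g_{ac})`
for a Type IIA structure in normal form, `r = |φ| > 0`. -/
theorem typeIIA_bilinear_identity
    (r : ℝ) (hr : 0 < r)
    (ωInv : Matrix (Fin 6) (Fin 6) ℝ) (hinv : omegaStd * ωInv = 1)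
    (a b c d : Fin 6) :
    (∑ i : Fin 6, ∑ j : Fin 6, ωInv i j * phiIIA r i a b * phiIIA r j c d)
      = r ^ 2 / 4 * (omegaStd a c * gStd b d - omegaStd b c * gStd a d
          - omegaStd a d * gStd b c + omegaStd b d * gStd a c) :=
  typeIIA_bilinear_identity_general r ωInv hinv a b c d
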